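/- Assume C has all copowers of X and all powers of Y indexed by subsets of List A, and suppose the object N_{List A, List A} is (E,M)-noetherian. Then: (i) there is no sequence T_1 ⊆ T_2 ⊆ ⋯ of subsets of List A such that for every n the canonical morphism v_{List A, T_n ⊆ T_{n+1}} : N_{List A, T_{n+1}} → N_{List A, T_n} (which lies in E) fails to be an isomorphism; and (ii) there is no sequence Q_1 ⊆ Q_2 ⊆ ⋯ of subsets of List A such that for every n the canonical morphism u_{Q_n ⊆ Q_{n+1}, List A} : N_{Q_n, List A} → N_{Q_{n+1}, List A} (which lies in M) fails to be an isomorphism. -/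

import Mathlib

/-!
For a chain `T₀ ⊆ T₁ ⊆ ⋯` the canonical quotients `v_{Tₙ ⊆ univ} : N_{Q,univ} ⟶ N_{Q,Tₙ}` lie
in `E`, and by the uniqueness of diagonal fill-ins they are compatible with the connecting
morphisms `v_{Tₙ ⊆ Tₙ₊₁}`. A chain with no connecting morphism invertible is therefore exactly
a chain of `E`-quotients of `N_{Q,univ}` forbidden by noetherianity. Dually, the `M`-morphisms
`u_{Qₙ ⊆ univ} : N_{Qₙ,T} ⟶ N_{univ,T}` turn a chain `Qₙ` into a chain of `M`-subobjects.
-/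

open CategoryTheory

/-- A factorization system `(E, M)` on a category `C`. -/
structure FactSys {C : Type*} [Category C] (E M : MorphismProperty C) : Prop where
  E_iso : ∀ {X Y : C} (f : X ⟶ Y), IsIso f → E f
  M_iso : ∀ {X Y : C} (f : X ⟶ Y), IsIso f → M f
  E_comp : ∀ {X Y Z : C} (f : X ⟶ Y) (g : Y ⟶ Z), E f → E g → E (f ≫ g)
  M_comp : ∀ {X Y Z : C} (f : X ⟶ Y) (g : Y ⟶ Z), M f → M g → M (f ≫ g)
  fact : ∀ {X Y : C} (f : X ⟶ Y), ∃ (Z : C) (e : X ⟶ Z) (m : Z ⟶ Y), E e ∧ M m ∧ e ≫ m = f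
  diag : ∀ {X Y Z W : C} (e : X ⟶ Y) (m : Z ⟶ W) (u : X ⟶ Z) (v : Y ⟶ W),
    E e → M m → e ≫ v = u ≫ m → ∃! d : Y ⟶ Z, e ≫ d = u ∧ d ≫ m = v

/-- The setting of the chosen `(E,M)`-factorizations `N Q T` of the canonical morphisms
`c_{Q,T} : ∐_Q X ⟶ ∏_T Y` induced by the language `ℓ`: for every `Q` there is a copower
`P Q` of `X` over `Q` (with injections `ι`), for every `T` a power `R T` of `Y` over `T`
(with projections `π`), and for all `Q, T` a chosen factorization
`e Q T : P Q ⟶ N Q T` in `E`, `m Q T : N Q T ⟶ R T` in `M` of `c_{Q,T}`. -/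
structure Setup (A : Type) {C : Type*} [Category C] (E M : MorphismProperty C)
    (X Y : C) (ℓ : List A → (X ⟶ Y)) where
  P : Set (List A) → C
  ι : ∀ (Q : Set (List A)) (q : List A), q ∈ Q → (X ⟶ P Q)
  hP : ∀ (Q : Set (List A)) (Z : C) (f : ∀ q : List A, q ∈ Q → (X ⟶ Z)),
    ∃! g : P Q ⟶ Z, ∀ (q : List A) (hq : q ∈ Q), ι Q q hq ≫ g = f q hq
  R : Set (List A) → C
  π : ∀ (T : Set (List A)) (t : List A), t ∈ T → (R T ⟶ Y)
  hR : ∀ (T : Set (List A)) (Z : C) (f : ∀ t : List A, t ∈ T → (Z ⟶ Y)),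
    ∃! g : Z ⟶ R T, ∀ (t : List A) (ht : t ∈ T), g ≫ π T t ht = f t ht
  N : Set (List A) → Set (List A) → C
  e : ∀ Q T : Set (List A), P Q ⟶ N Q T
  m : ∀ Q T : Set (List A), N Q T ⟶ R T
  he : ∀ Q T : Set (List A), E (e Q T)
  hm : ∀ Q T : Set (List A), M (m Q T)
  hfact : ∀ (Q T : Set (List A)) (q : List A) (hq : q ∈ Q) (t : List A) (ht : t ∈ T),
    ι Q q hq ≫ e Q T ≫ m Q T ≫ π T t ht = ℓ (q ++ t)

namespace Setup

variable {A : Type} {C : Type*} [Category C] {E M : MorphismProperty C}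
  {X Y : C} {ℓ : List A → (X ⟶ Y)}

/-- `u` is the canonical morphism `u_{Q⊆Q',T} : N Q T ⟶ N Q' T`:
it satisfies `u ∘ e_{Q,T} = e_{Q',T} ∘ (canonical inclusion)` and
`m_{Q',T} ∘ u = m_{Q,T}`. -/
def IsU (S : Setup A E M X Y ℓ) {Q Q' : Set (List A)} (T : Set (List A))
    (h : Q ⊆ Q') (u : S.N Q T ⟶ S.N Q' T) : Prop :=
  (∀ (q : List A) (hq : q ∈ Q),
    S.ι Q q hq ≫ S.e Q T ≫ u = S.ι Q' q (h hq) ≫ S.e Q' T) ∧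
  u ≫ S.m Q' T = S.m Q T

/-- `v` is the canonical morphism `v_{Q,T⊆T'} : N Q T' ⟶ N Q T`:
it satisfies `v ∘ e_{Q,T'} = e_{Q,T}` and
`m_{Q,T} ∘ v = (canonical restriction) ∘ m_{Q,T'}`. -/
def IsV (S : Setup A E M X Y ℓ) {T T' : Set (List A)} (Q : Set (List A))
    (h : T ⊆ T') (v : S.N Q T' ⟶ S.N Q T) : Prop :=
  (S.e Q T' ≫ v = S.e Q T) ∧
  (∀ (t : List A) (ht : t ∈ T),
    v ≫ S.m Q T ≫ S.π T t ht = S.m Q T' ≫ S.π T' t (h ht))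

end Setup

/-- An object `X` is `(E,M)`-noetherian: no infinite cochain of non-invertible
`E`-quotients and no infinite chain of non-invertible `M`-subobjects. -/
def Noetherian {C : Type*} [Category C] (E M : MorphismProperty C) (X : C) : Prop :=
  (¬ ∃ (Y : ℕ → C) (f : ∀ n, X ⟶ Y n) (e : ∀ n, Y (n + 1) ⟶ Y n),
    (∀ n, E (f n)) ∧ (∀ n, E (e n)) ∧
    (∀ n, f (n + 1) ≫ e n = f n) ∧ (∀ n, ¬ IsIso (e n))) ∧
  (¬ ∃ (Z : ℕ → C) (g : ∀ n, Z n ⟶ X) (m : ∀ n, Z n ⟶ Z (n + 1)),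
    (∀ n, M (g n)) ∧ (∀ n, M (m n)) ∧
    (∀ n, m n ≫ g (n + 1) = g n) ∧ (∀ n, ¬ IsIso (m n)))

namespace FactSys

variable {C : Type*} [Category C] {E M : MorphismProperty C}

lemma hom_ext (fs : FactSys E M) {X Y Z W : C} {e : X ⟶ Y} {m : Z ⟶ W} (he : E e) (hm : M m)
    {d d' : Y ⟶ Z} (h₁ : e ≫ d = e ≫ d') (h₂ : d ≫ m = d' ≫ m) : d = d' := by
  obtain ⟨_, -, huniq⟩ := fs.diag e m (e ≫ d) (d ≫ m) he hm (Category.assoc _ _ _).symm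
  exact (huniq d ⟨rfl, rfl⟩).trans (huniq d' ⟨h₁.symm, h₂.symm⟩).symm

/-- The `M`-part of the `(E,M)`-factorization of `g` is split by the diagonal of a square whose
left side is `f ≫ g ∈ E`, and it is then invertible. -/
lemma of_comp_left (fs : FactSys E M) {X Y Z : C} {f : X ⟶ Y} {g : Y ⟶ Z}
    (hf : E f) (hfg : E (f ≫ g)) : E g := by
  obtain ⟨W, e, m, he, hm, rfl⟩ := fs.fact g
  obtain ⟨d, ⟨hd₁, hd₂⟩, -⟩ := fs.diag (f ≫ e ≫ m) m (f ≫ e) (𝟙 Z) hfg hm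
    (by rw [Category.comp_id, Category.assoc])
  have hmd_e : (e ≫ m) ≫ d = e :=
    fs.hom_ext hf hm (by rw [← Category.assoc, hd₁])
      (by rw [Category.assoc, hd₂, Category.comp_id])
  have hmd : m ≫ d = 𝟙 W :=
    fs.hom_ext he hm (by rw [← Category.assoc, hmd_e, Category.comp_id])
      (by rw [Category.assoc, hd₂, Category.comp_id, Category.id_comp])
  have : IsIso m := ⟨⟨d, hmd, hd₂⟩⟩
  exact fs.E_comp e m he (fs.E_iso m this)

lemma of_comp_right (fs : FactSys E M) {X Y Z : C} {f : X ⟶ Y} {g : Y ⟶ Z}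
    (hg : M g) (hfg : M (f ≫ g)) : M f := by
  obtain ⟨W, e, m, he, hm, rfl⟩ := fs.fact f
  obtain ⟨d, ⟨hd₁, hd₂⟩, -⟩ := fs.diag e ((e ≫ m) ≫ g) (𝟙 X) (m ≫ g) he hfg
    (by rw [Category.id_comp, Category.assoc])
  have hd_em : d ≫ e ≫ m = m :=
    fs.hom_ext he hg (by rw [← Category.assoc, hd₁, Category.id_comp])
      (by simpa only [Category.assoc] using hd₂)
  have hde : d ≫ e = 𝟙 W :=
    fs.hom_ext he (fs.M_comp m g hm hg)
      (by rw [← Category.assoc, hd₁, Category.id_comp, Category.comp_id])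
      (by rw [Category.id_comp, ← Category.assoc, Category.assoc d, hd_em])
  have : IsIso e := ⟨⟨d, hd₁, hde⟩⟩
  exact fs.M_comp e m (fs.M_iso e this) hm

end FactSys

namespace Setup

variable {A : Type} {C : Type*} [Category C] {E M : MorphismProperty C}
  {X Y : C} {ℓ : List A → (X ⟶ Y)} (S : Setup A E M X Y ℓ)

lemma P_hom_ext {Q : Set (List A)} {Z : C} {g g' : S.P Q ⟶ Z}
    (h : ∀ q (hq : q ∈ Q), S.ι Q q hq ≫ g = S.ι Q q hq ≫ g') : g = g' :=
  (S.hP Q Z fun q hq => S.ι Q q hq ≫ g').unique h fun _ _ => rfl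

lemma R_hom_ext {T : Set (List A)} {Z : C} {g g' : Z ⟶ S.R T}
    (h : ∀ t (ht : t ∈ T), g ≫ S.π T t ht = g' ≫ S.π T t ht) : g = g' :=
  (S.hR T Z fun t ht => g' ≫ S.π T t ht).unique h fun _ _ => rfl

lemma e_comp_m_eq {Q T : Set (List A)} {c : S.P Q ⟶ S.R T}
    (hc : ∀ q (hq : q ∈ Q) t (ht : t ∈ T), S.ι Q q hq ≫ c ≫ S.π T t ht = ℓ (q ++ t)) :
    S.e Q T ≫ S.m Q T = c :=
  S.P_hom_ext fun q hq => S.R_hom_ext fun t ht => by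
    simp only [Category.assoc, S.hfact, hc]

variable {S}

lemma IsV.mem_E (fs : FactSys E M) {Q T T' : Set (List A)} {h : T ⊆ T'}
    {v : S.N Q T' ⟶ S.N Q T} (hv : S.IsV Q h v) : E v :=
  fs.of_comp_left (S.he Q T') (hv.1 ▸ S.he Q T)

lemma IsU.mem_M (fs : FactSys E M) {Q Q' T : Set (List A)} {h : Q ⊆ Q'}
    {u : S.N Q T ⟶ S.N Q' T} (hu : S.IsU T h u) : M u :=
  fs.of_comp_right (S.hm Q' T) (hu.2 ▸ S.hm Q T)

lemma IsV.unique (fs : FactSys E M) {Q T T' : Set (List A)} {h : T ⊆ T'}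
    {v v' : S.N Q T' ⟶ S.N Q T} (hv : S.IsV Q h v) (hv' : S.IsV Q h v') : v = v' :=
  fs.hom_ext (S.he Q T') (S.hm Q T) (hv.1.trans hv'.1.symm) <| S.R_hom_ext fun t ht => by
    simp only [Category.assoc, hv.2, hv'.2]

lemma IsU.unique (fs : FactSys E M) {Q Q' T : Set (List A)} {h : Q ⊆ Q'}
    {u u' : S.N Q T ⟶ S.N Q' T} (hu : S.IsU T h u) (hu' : S.IsU T h u') : u = u' :=
  fs.hom_ext (S.he Q T) (S.hm Q' T)
    (S.P_hom_ext fun q hq => by rw [hu.1, hu'.1]) (hu.2.trans hu'.2.symm)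

lemma IsV.comp {Q T₁ T₂ T₃ : Set (List A)} {h₁₂ : T₁ ⊆ T₂} {h₂₃ : T₂ ⊆ T₃}
    {v : S.N Q T₃ ⟶ S.N Q T₂} {v' : S.N Q T₂ ⟶ S.N Q T₁}
    (hv : S.IsV Q h₂₃ v) (hv' : S.IsV Q h₁₂ v') : S.IsV Q (h₁₂.trans h₂₃) (v ≫ v') :=
  ⟨by rw [← Category.assoc, hv.1, hv'.1], fun t ht => by
    rw [Category.assoc, hv'.2 t ht, hv.2 t (h₁₂ ht)]⟩

lemma IsU.comp {Q₁ Q₂ Q₃ T : Set (List A)} {h₁₂ : Q₁ ⊆ Q₂} {h₂₃ : Q₂ ⊆ Q₃}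
    {u : S.N Q₁ T ⟶ S.N Q₂ T} {u' : S.N Q₂ T ⟶ S.N Q₃ T}
    (hu : S.IsU T h₁₂ u) (hu' : S.IsU T h₂₃ u') : S.IsU T (h₁₂.trans h₂₃) (u ≫ u') :=
  ⟨fun q hq => by rw [← Category.assoc (S.e Q₁ T), ← Category.assoc, hu.1 q hq,
    Category.assoc, hu'.1 q (h₁₂ hq)], by rw [Category.assoc, hu'.2, hu.2]⟩

variable (S)

/-- `v` is the diagonal of the square `e_{Q,T'} ≫ m_{Q,T'} ≫ restriction = e_{Q,T} ≫ m_{Q,T}`,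
both sides being `c_{Q,T}`. -/
lemma exists_isV (fs : FactSys E M) (Q : Set (List A)) {T T' : Set (List A)} (h : T ⊆ T') :
    ∃ v, S.IsV Q h v := by
  obtain ⟨r, hr, -⟩ := S.hR T (S.R T') fun t ht => S.π T' t (h ht)
  have hsq : S.e Q T' ≫ S.m Q T' ≫ r = S.e Q T ≫ S.m Q T :=
    (S.e_comp_m_eq fun q hq t ht => by simp only [Category.assoc, hr, S.hfact]).symm
  obtain ⟨v, ⟨hv₁, hv₂⟩, -⟩ := fs.diag _ _ _ _ (S.he Q T') (S.hm Q T) hsq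
  exact ⟨v, hv₁, fun t ht => by rw [← Category.assoc, hv₂, Category.assoc, hr]⟩

/-- `u` is the diagonal of the square `e_{Q,T} ≫ m_{Q,T} = (inclusion ≫ e_{Q',T}) ≫ m_{Q',T}`,
both sides being `c_{Q,T}`. -/
lemma exists_isU (fs : FactSys E M) {Q Q' : Set (List A)} (T : Set (List A)) (h : Q ⊆ Q') :
    ∃ u, S.IsU T h u := by
  obtain ⟨i, hi, -⟩ := S.hP Q (S.P Q') fun q hq => S.ι Q' q (h hq)
  have hsq : S.e Q T ≫ S.m Q T = (i ≫ S.e Q' T) ≫ S.m Q' T :=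
    S.e_comp_m_eq fun q hq t ht => by
      simp only [Category.assoc, reassoc_of% hi, S.hfact]
  obtain ⟨u, ⟨hu₁, hu₂⟩, -⟩ := fs.diag _ _ _ _ (S.he Q T) (S.hm Q' T) hsq
  exact ⟨u, fun q hq => by rw [hu₁, reassoc_of% hi], hu₂⟩

theorem not_exists_isV_chain (fs : FactSys E M) (Q : Set (List A))
    (hnoeth : Noetherian E M (S.N Q Set.univ)) :
    ¬ ∃ (T : ℕ → Set (List A)) (hT : ∀ n, T n ⊆ T (n + 1)),
      ∀ n, ∃ v : S.N Q (T (n + 1)) ⟶ S.N Q (T n), S.IsV Q (hT n) v ∧ ¬ IsIso v := by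
  rintro ⟨T, hT, hchain⟩
  choose v hv hv_iso using hchain
  choose f hf using fun n => S.exists_isV fs Q (Set.subset_univ (T n))
  exact hnoeth.1 ⟨_, f, v, fun n => (hf n).mem_E fs, fun n => (hv n).mem_E fs,
    fun n => ((hf (n + 1)).comp (hv n)).unique fs (hf n), hv_iso⟩

theorem not_exists_isU_chain (fs : FactSys E M) (T : Set (List A))
    (hnoeth : Noetherian E M (S.N Set.univ T)) :
    ¬ ∃ (Q : ℕ → Set (List A)) (hQ : ∀ n, Q n ⊆ Q (n + 1)),
      ∀ n, ∃ u : S.N (Q n) T ⟶ S.N (Q (n + 1)) T, S.IsU T (hQ n) u ∧ ¬ IsIso u := by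
  rintro ⟨Q, hQ, hchain⟩
  choose u hu hu_iso using hchain
  choose g hg using fun n => S.exists_isU fs T (Set.subset_univ (Q n))
  exact hnoeth.2 ⟨_, g, u, fun n => (hg n).mem_M fs, fun n => (hu n).mem_M fs,
    fun n => ((hu n).comp (hg (n + 1))).unique fs (hg n), hu_iso⟩

end Setup

theorem stmt16_general {A : Type} {C : Type*} [Category C]
    (E M : MorphismProperty C) (fs : FactSys E M) {X Y : C}
    (ℓ : List A → (X ⟶ Y)) (S : Setup A E M X Y ℓ)
    (hnoeth : Noetherian E M (S.N Set.univ Set.univ)) :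
    (¬ ∃ (T : ℕ → Set (List A)) (hT : ∀ n, T n ⊆ T (n + 1)),
      ∀ n, ∃ v : S.N Set.univ (T (n + 1)) ⟶ S.N Set.univ (T n),
        S.IsV Set.univ (hT n) v ∧ ¬ IsIso v) ∧
    (¬ ∃ (Q : ℕ → Set (List A)) (hQ : ∀ n, Q n ⊆ Q (n + 1)),
      ∀ n, ∃ u : S.N (Q n) Set.univ ⟶ S.N (Q (n + 1)) Set.univ,
        S.IsU Set.univ (hQ n) u ∧ ¬ IsIso u) :=
  ⟨S.not_exists_isV_chain fs Set.univ hnoeth, S.not_exists_isU_chain fs Set.univ hnoeth⟩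

/-- if `N (List A) (List A)` is `(E,M)`-noetherian, there is no increasing
chain of test sets all of whose canonical `E`-morphisms are non-invertible, and no
increasing chain of state-word sets all of whose canonical `M`-morphisms are
non-invertible. -/
theorem stmt16 {A : Type} [Fintype A] {C : Type*} [Category C]
    (E M : MorphismProperty C) (fs : FactSys E M) {X Y : C}
    (ℓ : List A → (X ⟶ Y)) (S : Setup A E M X Y ℓ)
    (hnoeth : Noetherian E M (S.N Set.univ Set.univ)) :
    (¬ ∃ (T : ℕ → Set (List A)) (hT : ∀ n, T n ⊆ T (n + 1)),
      ∀ n, ∃ v : S.N Set.univ (T (n + 1)) ⟶ S.N Set.univ (T n),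
        S.IsV Set.univ (hT n) v ∧ ¬ IsIso v) ∧
    (¬ ∃ (Q : ℕ → Set (List A)) (hQ : ∀ n, Q n ⊆ Q (n + 1)),
      ∀ n, ∃ u : S.N (Q n) Set.univ ⟶ S.N (Q (n + 1)) Set.univ,
        S.IsU Set.univ (hQ n) u ∧ ¬ IsIso u) :=
  stmt16_general E M fs ℓ S hnoeth
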